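/- The class of admissible sequences is stable under cyclic shifts: if (a₁,…,aₙ) is admissible, then (a₂,…,aₙ,a₁) is admissible. -/

import Mathlib

/-- The `m`-th elementary augmentation (for `1 ≤ m ≤ n + 1`, `n = l.length`):
insert `-1` at position `m - 1` and subtract `1` from the two (cyclically) adjacent
entries of the original sequence, i.e. at indices `(m + n - 2) % n` and `(m - 1) % n`.
This reproduces:
`augm₁(a₁,…,aₙ) = (-1, a₁-1, a₂, …, a_{n-1}, aₙ-1)`,
`augmₘ(a₁,…,aₙ) = (a₁, …, a_{m-2}, a_{m-1}-1, -1, aₘ-1, a_{m+1}, …, aₙ)` for `2 ≤ m ≤ n`,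
`augm_{n+1}(a₁,…,aₙ) = (a₁-1, a₂, …, aₙ-1, -1)`. -/
def augm (m : ℕ) (l : List ℤ) : List ℤ :=
  List.insertIdx
    (List.modify
      (List.modify l ((m + l.length - 2) % l.length) (· - 1))
      ((m - 1) % l.length) (· - 1))
    (m - 1) (-1)

/-- A sequence of integers is admissible if it can be obtained from `(0, k, 0, -k)` or
`(k, 0, -k, 0)` for some `k ∈ ℤ` by finitely many elementary augmentations. -/
inductive Admissible : List ℤ → Prop
  | base₁ (k : ℤ) : Admissible [0, k, 0, -k]
  | base₂ (k : ℤ) : Admissible [k, 0, -k, 0]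
  | aug (m : ℕ) (l : List ℤ) (h₁ : 1 ≤ m) (h₂ : m ≤ l.length + 1)
      (hl : Admissible l) : Admissible (augm m l)

/-
Augmentation is cyclically symmetric: inserting `-1` between two cyclically adjacent entries
and decrementing them commutes with rotation. Concretely, `augm m l` is `augm 1` applied to
`l` rotated by `m - 1`, rotated back. Hence rotating `augm m l` by one step gives
`augm (m - 1)` of the rotated sequence (or `augm (n + 1) l` when `m = 1`), and the claim
follows by induction on admissibility; the two base sequences are rotations of each other.
-/

namespace List

variable {α : Type*}

theorem modify_append_of_lt (f : α → α) {i : ℕ} {u : List α} (v : List α)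
    (h : i < u.length) :
    (u ++ v).modify i f = u.modify i f ++ v := by
  induction u generalizing i with
  | nil => simp at h
  | cons a u ih =>
    cases i with
    | zero => simp
    | succ i => simp [ih (Nat.lt_of_succ_lt_succ h)]

theorem modify_append_of_le (f : α → α) {i : ℕ} (u : List α) {v : List α}
    (h : u.length ≤ i) :
    (u ++ v).modify i f = u ++ v.modify (i - u.length) f := by
  induction u generalizing i with
  | nil => simp
  | cons a u ih =>
    obtain ⟨i, rfl⟩ := Nat.exists_eq_add_one_of_ne_zero (by simp at h; omega : i ≠ 0)
    simp [ih (by simpa using h)]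

theorem insertIdx_append_of_eq_length (x : α) {i : ℕ} {u : List α} (v : List α)
    (h : i = u.length) : (u ++ v).insertIdx i x = u ++ x :: v := by
  subst h
  induction u with
  | nil => simp
  | cons a u ih => simp [insertIdx_succ_cons, ih]

end List

open List

lemma augm_one (l : List ℤ) :
    augm 1 l = -1 :: (l.modify (l.length - 1) (· - 1)).modify 0 (· - 1) := by
  rw [augm, show (1 + l.length - 2) % l.length = l.length - 1 by
    rcases l.length with _ | n
    · rfl
    · rw [Nat.mod_eq_of_lt (by omega)]
      omega]
  rfl

lemma length_augm_one (l : List ℤ) : (augm 1 l).length = l.length + 1 := by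
  simp [augm_one]

lemma augm_length_add_one (l : List ℤ) :
    augm (l.length + 1) l = (l.modify (l.length - 1) (· - 1)).modify 0 (· - 1) ++ [-1] := by
  rw [augm, show (l.length + 1 + l.length - 2) % l.length = l.length - 1 by
    rcases l.length with _ | n
    · rfl
    · rw [show n + 1 + 1 + (n + 1) - 2 = n + (n + 1) by omega, Nat.add_mod_right,
        Nat.mod_eq_of_lt (by omega)]
      rfl]
  simpa using insertIdx_length_self (l := (l.modify (l.length - 1) (· - 1)).modify 0 (· - 1))

lemma rotate_augm_one (l : List ℤ) : (augm 1 l).rotate 1 = augm (l.length + 1) l := by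
  rw [augm_one, augm_length_add_one, rotate_cons_succ, rotate_zero]

lemma augm_append {u v : List ℤ} (hu : u ≠ []) (hv : v ≠ []) :
    augm (u.length + 1) (u ++ v) =
      u.modify (u.length - 1) (· - 1) ++ -1 :: v.modify 0 (· - 1) := by
  have hu' := length_pos_iff.2 hu
  have hv' := length_pos_iff.2 hv
  rw [augm, length_append,
    show (u.length + 1 + (u.length + v.length) - 2) % (u.length + v.length) = u.length - 1 by
      rw [show u.length + 1 + (u.length + v.length) - 2 = u.length - 1 + (u.length + v.length)
        by omega, Nat.add_mod_right, Nat.mod_eq_of_lt (by omega)],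
    Nat.add_sub_cancel, Nat.mod_eq_of_lt (by omega : u.length < u.length + v.length),
    modify_append_of_lt _ _ (by omega), modify_append_of_le _ _ (by simp),
    insertIdx_append_of_eq_length _ _ (by simp)]
  simp

lemma augm_one_append {u v : List ℤ} (hu : u ≠ []) (hv : v ≠ []) :
    augm 1 (v ++ u) = -1 :: (v.modify 0 (· - 1) ++ u.modify (u.length - 1) (· - 1)) := by
  have hu' := length_pos_iff.2 hu
  rw [augm_one, modify_append_of_le _ _ (by simp; omega),
    modify_append_of_lt _ _ (length_pos_iff.2 hv), length_append,
    show v.length + u.length - 1 - v.length = u.length - 1 by omega]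

lemma augm_eq_rotate_augm_one (l : List ℤ) {m : ℕ} (h1 : 1 ≤ m) (h2 : m ≤ l.length + 1) :
    augm m l = (augm 1 (l.rotate (m - 1))).rotate (l.length + 2 - m) := by
  rcases h1.eq_or_lt with rfl | hm1
  · rw [rotate_zero, show l.length + 2 - 1 = (augm 1 l).length by simp [length_augm_one],
      rotate_length]
  rcases h2.eq_or_lt with rfl | hm2
  · rw [← rotate_augm_one, Nat.add_sub_cancel, rotate_length,
      show l.length + 2 - (l.length + 1) = 1 by omega]
  obtain ⟨u, v, rfl, hu⟩ : ∃ u v, l = u ++ v ∧ u.length = m - 1 :=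
    ⟨_, _, (take_append_drop (m - 1) l).symm, length_take_of_le (by omega)⟩
  obtain rfl : m = u.length + 1 := by omega
  have hu0 : u ≠ [] := by rintro rfl; simp at hm1
  have hv0 : v ≠ [] := by rintro rfl; simp at hm2
  rw [Nat.add_sub_cancel, rotate_append_length_eq, augm_append hu0 hv0, augm_one_append hu0 hv0,
    ← cons_append, show (u ++ v).length + 2 - (u.length + 1) = (-1 :: v.modify 0 (· - 1)).length
      by simp; omega, rotate_append_length_eq]

lemma rotate_augm (l : List ℤ) {m : ℕ} (h1 : 2 ≤ m) (h2 : m ≤ l.length + 1) :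
    (augm m l).rotate 1 = augm (m - 1) (l.rotate 1) := by
  rw [augm_eq_rotate_augm_one l (by omega) h2,
    augm_eq_rotate_augm_one (l.rotate 1) (m := m - 1) (by omega) (by simp; omega),
    rotate_rotate, rotate_rotate, length_rotate, show 1 + (m - 1 - 1) = m - 1 by omega,
    show l.length + 2 - m + 1 = l.length + 2 - (m - 1) by omega]

/-- Admissible sequences are stable under cyclic shifts: if `(a₁, …, aₙ)`
is admissible, then so is `(a₂, …, aₙ, a₁)`. -/
theorem Admissible.rotate (l : List ℤ) (hl : Admissible l) :
    Admissible (l.rotate 1) := by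
  induction hl with
  | base₁ k => exact .base₂ k
  | base₂ k => simpa using Admissible.base₁ (-k)
  | aug m l h1 h2 hl ih =>
    rcases h1.eq_or_lt with rfl | h1
    · rw [rotate_augm_one]
      exact .aug _ l (by omega) le_rfl hl
    · rw [rotate_augm l h1 h2]
      exact .aug _ _ (by omega) (by simp; omega) ih
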